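/- For the sequence t_n = 1 − e^{−n}, the vertical position of the particle in the construction satisfies s_y(t_n) = (5³(e−1)³)/(6³·8π) · Σ_{i=1}^{n} e^{−3i} for all n ∈ ℕ, and consequently s_y(t_n) → 5³(e−1)³/(6³·8π(e³−1)) as n → ∞. -/

import Mathlib

open Real Filter

/-- The acceleration bump `φ_{a,b}`. -/
noncomputable def phi (a b t : ℝ) : ℝ :=
  ((b - a) / 4) * Real.sin (2 * π * (t - a) / (b - a))

/-- The round-trip acceleration `ξ_{a,b}`. -/
noncomputable def xi (a b t : ℝ) : ℝ :=
  if t ≤ (a + b) / 2 then -phi a ((a + b) / 2) t else phi ((a + b) / 2) b t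

/-- The division points `d_i` used in the definition of `ψ_{a,b,n}`. -/
noncomputable def dPt (a b : ℝ) (n i : ℕ) : ℝ :=
  (a + 5 * b) / 6 + (i : ℝ) * (b - a) / (6 * (n : ℝ))

/-- The acceleration `ψ_{a,b,n}` : one forward bump followed by `n` round trips. -/
noncomputable def psi (a b : ℝ) (n : ℕ) (t : ℝ) : ℝ :=
  if t ≤ dPt a b n 0 then phi a (dPt a b n 0) t
  else
    xi (dPt a b n (⌈(t - dPt a b n 0) / ((b - a) / (6 * (n : ℝ)))⌉₊ - 1))
       (dPt a b n ⌈(t - dPt a b n 0) / ((b - a) / (6 * (n : ℝ)))⌉₊) t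

/-- The stopping times `t_n = 1 - e^{-n}`. -/
noncomputable def tSeq (n : ℕ) : ℝ := 1 - Real.exp (-(n : ℝ))

/-- The vertical acceleration `a_y` of the construction. -/
noncomputable def aY (t : ℝ) : ℝ :=
  if t < 1 then
    psi (tSeq ⌊-Real.log (1 - t)⌋₊) (tSeq (⌊-Real.log (1 - t)⌋₊ + 1))
      (⌊-Real.log (1 - t)⌋₊ + 1) t
  else 0

/-- The vertical velocity `v_y`. -/
noncomputable def vY (t : ℝ) : ℝ := ∫ θ in (0 : ℝ)..t, aY θ

/-- The vertical position `s_y`. -/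
noncomputable def sY (t : ℝ) : ℝ := ∫ θ in (0 : ℝ)..t, vY θ


/-! Write `displacement f a b = ∫_a^b ∫_a^t f` for the position reached at time `b` by a
particle at rest at time `a` with acceleration `f`, so that `sY t = displacement aY 0 t`. When
`∫_a^b f = 0` the particle is at rest again at `b`, so displacements add over adjacent
intervals. A bump `φ_{a,b}` brings the particle back to rest after moving it by `(b - a)³/(8π)`;
a round trip `ξ` is a bump backwards followed by a bump forwards of the same length, so it moves
it by `0`. Hence `ψ_{a,b,n}` moves it by `((5/6)(b - a))³/(8π)`, and on `[t_m, t_{m+1}]`, of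
length `e^{-(m+1)}(e - 1)`, this is the `(m+1)`-st term of a geometric series of ratio `e^{-3}`.
-/

open MeasureTheory Set intervalIntegral

noncomputable def displacement (f : ℝ → ℝ) (a b : ℝ) : ℝ :=
  ∫ t in a..b, ∫ s in a..t, f s

section Displacement

variable {f g : ℝ → ℝ} {a b c : ℝ}

lemma displacement_congr (hab : a ≤ b) (h : EqOn f g (Ioo a b)) :
    displacement f a b = displacement g a b := by
  refine integral_congr fun t ht => ?_
  rw [uIcc_of_le hab] at ht
  exact integral_congr_Ioo_of_le ht.1 (h.mono (Ioo_subset_Ioo_right ht.2))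

lemma displacement_neg : displacement (fun t => -f t) a b = -displacement f a b := by
  simp only [displacement, intervalIntegral.integral_neg]

lemma displacement_add_adjacent_intervals (hab : IntervalIntegrable f volume a b)
    (hbc : IntervalIntegrable f volume b c) (h0 : ∫ t in a..b, f t = 0) :
    displacement f a b + displacement f b c = displacement f a c := by
  have hV : EqOn (fun t => ∫ s in a..t, f s) (fun t => ∫ s in b..t, f s) (uIcc b c) :=
    fun t ht => by
      dsimp only
      rw [← integral_add_adjacent_intervals hab (hbc.mono_set (uIcc_subset_uIcc_left ht)), h0,
        zero_add]
  have hVab : IntervalIntegrable (fun t => ∫ s in a..t, f s) volume a b :=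
    (continuousOn_primitive_interval' hab left_mem_uIcc).intervalIntegrable
  have hVbc : IntervalIntegrable (fun t => ∫ s in a..t, f s) volume b c :=
    ((continuousOn_primitive_interval' hbc left_mem_uIcc).congr hV).intervalIntegrable
  rw [displacement, displacement, displacement, ← integral_add_adjacent_intervals hVab hVbc,
    integral_congr hV]

variable {x : ℕ → ℝ}

lemma integral_eq_zero_of_adjacent_intervals
    (hf : ∀ i, IntervalIntegrable f volume (x i) (x (i + 1)))
    (h0 : ∀ i, ∫ t in x i..x (i + 1), f t = 0) (k : ℕ) :
    ∫ t in x 0..x k, f t = 0 := by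
  rw [← sum_integral_adjacent_intervals fun i _ => hf i]
  exact Finset.sum_eq_zero fun i _ => h0 i

lemma sum_displacement_adjacent_intervals
    (hf : ∀ i, IntervalIntegrable f volume (x i) (x (i + 1)))
    (h0 : ∀ i, ∫ t in x i..x (i + 1), f t = 0) (k : ℕ) :
    ∑ i ∈ Finset.range k, displacement f (x i) (x (i + 1)) = displacement f (x 0) (x k) := by
  induction k with
  | zero => simp [displacement]
  | succ k ih =>
    rw [Finset.sum_range_succ, ih, displacement_add_adjacent_intervals
      (IntervalIntegrable.trans_iterate fun i _ => hf i) (hf k)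
      (integral_eq_zero_of_adjacent_intervals hf h0 k)]

end Displacement

section Bump

variable {a b : ℝ}

noncomputable def phiVel (a b t : ℝ) : ℝ :=
  (b - a) ^ 2 / (8 * π) * (1 - cos (2 * π * (t - a) / (b - a)))

noncomputable def phiPos (a b t : ℝ) : ℝ :=
  (b - a) ^ 2 / (8 * π) * ((t - a) - (b - a) / (2 * π) * sin (2 * π * (t - a) / (b - a)))

lemma hasDerivAt_phase (a b t : ℝ) :
    HasDerivAt (fun t => 2 * π * (t - a) / (b - a)) (2 * π / (b - a)) t := by
  simpa using (((hasDerivAt_id t).sub_const a).const_mul (2 * π)).div_const (b - a)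

lemma hasDerivAt_phiVel (hab : a ≠ b) (t : ℝ) : HasDerivAt (phiVel a b) (phi a b t) t := by
  refine (((hasDerivAt_phase a b t).cos.const_sub 1).const_mul
    ((b - a) ^ 2 / (8 * π))).congr_deriv ?_
  have : b - a ≠ 0 := sub_ne_zero.2 hab.symm
  rw [phi]
  field_simp
  ring

lemma hasDerivAt_phiPos (hab : a ≠ b) (t : ℝ) : HasDerivAt (phiPos a b) (phiVel a b t) t := by
  refine ((((hasDerivAt_id' t).sub_const a).sub
    ((hasDerivAt_phase a b t).sin.const_mul ((b - a) / (2 * π)))).const_mul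
    ((b - a) ^ 2 / (8 * π))).congr_deriv ?_
  have : b - a ≠ 0 := sub_ne_zero.2 hab.symm
  rw [phiVel]
  field_simp

lemma continuous_phi (a b : ℝ) : Continuous (phi a b) := by
  unfold phi; fun_prop

lemma continuous_phiVel (a b : ℝ) : Continuous (phiVel a b) := by
  unfold phiVel; fun_prop

lemma phi_left : phi a b a = 0 := by simp [phi]

lemma phi_right : phi a b b = 0 := by
  rcases eq_or_ne a b with rfl | hab
  · simp [phi]
  · rw [phi, mul_div_assoc, div_self (sub_ne_zero.2 hab.symm), mul_one, sin_two_pi, mul_zero]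

lemma integral_phi_left (hab : a ≠ b) (t : ℝ) : ∫ s in a..t, phi a b s = phiVel a b t := by
  rw [integral_eq_sub_of_hasDerivAt (fun s _ => hasDerivAt_phiVel hab s)
    ((continuous_phi a b).intervalIntegrable a t)]
  simp [phiVel]

lemma integral_phi (hab : a ≠ b) : ∫ t in a..b, phi a b t = 0 := by
  rw [integral_phi_left hab, phiVel, mul_div_assoc, div_self (sub_ne_zero.2 hab.symm), mul_one,
    cos_two_pi, sub_self, mul_zero]

lemma displacement_phi (hab : a ≠ b) : displacement (phi a b) a b = (b - a) ^ 3 / (8 * π) := by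
  rw [displacement, integral_congr fun t _ => integral_phi_left hab t,
    integral_eq_sub_of_hasDerivAt (fun t _ => hasDerivAt_phiPos hab t)
      ((continuous_phiVel a b).intervalIntegrable a b)]
  have : b - a ≠ 0 := sub_ne_zero.2 hab.symm
  simp only [phiPos, mul_div_assoc, div_self this, mul_one, sin_two_pi, mul_zero, sub_zero,
    sub_self, zero_div, sin_zero]
  field_simp

end Bump

section RoundTrip

variable {p q : ℝ}

lemma continuous_xi (p q : ℝ) : Continuous (xi p q) :=
  Continuous.if_le (continuous_phi _ _).neg (continuous_phi _ _) continuous_id continuous_const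
    fun t ht => by simp [ht, phi_left, phi_right]

lemma xi_of_mem_Ioo_left {t : ℝ} (ht : t ∈ Ioo p ((p + q) / 2)) :
    xi p q t = -phi p ((p + q) / 2) t :=
  if_pos ht.2.le

lemma xi_of_mem_Ioo_right {t : ℝ} (ht : t ∈ Ioo ((p + q) / 2) q) :
    xi p q t = phi ((p + q) / 2) q t :=
  if_neg (not_le.2 ht.1)

lemma integral_xi_left (hpq : p < q) : ∫ t in p..(p + q) / 2, xi p q t = 0 := by
  have hm : p < (p + q) / 2 := by linarith
  rw [integral_congr_Ioo_of_le hm.le fun t => xi_of_mem_Ioo_left, intervalIntegral.integral_neg,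
    integral_phi hm.ne, neg_zero]

lemma integral_xi (hpq : p < q) : ∫ t in p..q, xi p q t = 0 := by
  have hm : (p + q) / 2 < q := by linarith
  rw [← integral_add_adjacent_intervals ((continuous_xi p q).intervalIntegrable _ _)
    ((continuous_xi p q).intervalIntegrable _ _), integral_xi_left hpq,
    integral_congr_Ioo_of_le hm.le fun t => xi_of_mem_Ioo_right, integral_phi hm.ne, add_zero]

lemma displacement_xi (hpq : p < q) : displacement (xi p q) p q = 0 := by
  have hm₁ : p < (p + q) / 2 := by linarith
  have hm₂ : (p + q) / 2 < q := by linarith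
  rw [← displacement_add_adjacent_intervals ((continuous_xi p q).intervalIntegrable _ _)
      ((continuous_xi p q).intervalIntegrable _ _) (integral_xi_left hpq),
    displacement_congr hm₁.le fun t => xi_of_mem_Ioo_left,
    displacement_congr hm₂.le fun t => xi_of_mem_Ioo_right,
    displacement_neg, displacement_phi hm₁.ne, displacement_phi hm₂.ne]
  ring

end RoundTrip

section Psi

variable {a b : ℝ} {n : ℕ}

lemma dPt_zero_sub : dPt a b n 0 - a = 5 * (b - a) / 6 := by
  simp only [dPt, Nat.cast_zero, zero_mul, zero_div, add_zero]
  ring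

lemma lt_dPt_zero (hab : a < b) : a < dPt a b n 0 := by
  linarith [dPt_zero_sub (a := a) (b := b) (n := n)]

lemma dPt_eq_add_mul (i : ℕ) : dPt a b n i = dPt a b n 0 + i * ((b - a) / (6 * n)) := by
  simp only [dPt, Nat.cast_zero, zero_mul, zero_div, add_zero]
  ring

lemma dPt_self (hn : n ≠ 0) : dPt a b n n = b := by
  have : (n : ℝ) ≠ 0 := Nat.cast_ne_zero.2 hn
  rw [dPt]
  field_simp
  ring

lemma dPt_step_pos (hab : a < b) (hn : n ≠ 0) : 0 < (b - a) / (6 * n) := by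
  have : (0 : ℝ) < n := Nat.cast_pos.2 (Nat.pos_of_ne_zero hn)
  exact div_pos (sub_pos.2 hab) (by positivity)

lemma dPt_lt_succ (hab : a < b) (hn : n ≠ 0) (i : ℕ) : dPt a b n i < dPt a b n (i + 1) := by
  rw [dPt_eq_add_mul i, dPt_eq_add_mul (i + 1)]
  push_cast
  linarith [dPt_step_pos hab hn]

lemma ceil_eq_of_mem_Ioc_dPt (hab : a < b) (hn : n ≠ 0) {i : ℕ} {t : ℝ}
    (ht : t ∈ Ioc (dPt a b n i) (dPt a b n (i + 1))) :
    ⌈(t - dPt a b n 0) / ((b - a) / (6 * n))⌉₊ = i + 1 := by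
  have hδ := dPt_step_pos hab hn
  rw [dPt_eq_add_mul i, dPt_eq_add_mul (i + 1)] at ht
  rw [Nat.ceil_eq_iff i.succ_ne_zero, lt_div_iff₀ hδ, div_le_iff₀ hδ]
  push_cast at ht ⊢
  constructor <;> linarith [ht.1, ht.2]

lemma psi_eqOn_Ioo_dPt (hab : a < b) (hn : n ≠ 0) (i : ℕ) :
    EqOn (psi a b n) (xi (dPt a b n i) (dPt a b n (i + 1)))
      (Ioo (dPt a b n i) (dPt a b n (i + 1))) := fun t ht => by
  have hi : dPt a b n 0 ≤ dPt a b n i :=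
    (strictMono_nat_of_lt_succ (dPt_lt_succ hab hn)).monotone i.zero_le
  rw [psi, if_neg (not_le.2 (hi.trans_lt ht.1)),
    ceil_eq_of_mem_Ioc_dPt hab hn (Ioo_subset_Ioc_self ht), Nat.add_sub_cancel]

lemma psi_eqOn_Ioo_head : EqOn (psi a b n) (phi a (dPt a b n 0)) (Ioo a (dPt a b n 0)) :=
  fun _ ht => if_pos ht.2.le

lemma intervalIntegrable_psi_dPt (hab : a < b) (hn : n ≠ 0) (i : ℕ) :
    IntervalIntegrable (psi a b n) volume (dPt a b n i) (dPt a b n (i + 1)) :=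
  ((continuous_xi _ _).intervalIntegrable _ _).congr_uIoo <| by
    rw [uIoo_of_lt (dPt_lt_succ hab hn i)]
    exact (psi_eqOn_Ioo_dPt hab hn i).symm

lemma integral_psi_dPt (hab : a < b) (hn : n ≠ 0) (i : ℕ) :
    ∫ t in dPt a b n i..dPt a b n (i + 1), psi a b n t = 0 := by
  rw [integral_congr_Ioo_of_le (dPt_lt_succ hab hn i).le (psi_eqOn_Ioo_dPt hab hn i),
    integral_xi (dPt_lt_succ hab hn i)]

lemma displacement_psi_dPt (hab : a < b) (hn : n ≠ 0) (i : ℕ) :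
    displacement (psi a b n) (dPt a b n i) (dPt a b n (i + 1)) = 0 := by
  rw [displacement_congr (dPt_lt_succ hab hn i).le (psi_eqOn_Ioo_dPt hab hn i),
    displacement_xi (dPt_lt_succ hab hn i)]

lemma intervalIntegrable_psi_head (hab : a < b) :
    IntervalIntegrable (psi a b n) volume a (dPt a b n 0) :=
  ((continuous_phi _ _).intervalIntegrable _ _).congr_uIoo <| by
    rw [uIoo_of_lt (lt_dPt_zero hab)]
    exact psi_eqOn_Ioo_head.symm

lemma integral_psi_head (hab : a < b) : ∫ t in a..dPt a b n 0, psi a b n t = 0 := by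
  rw [integral_congr_Ioo_of_le (lt_dPt_zero hab).le psi_eqOn_Ioo_head,
    integral_phi (lt_dPt_zero hab).ne]

lemma displacement_psi_head (hab : a < b) :
    displacement (psi a b n) a (dPt a b n 0) = (5 * (b - a) / 6) ^ 3 / (8 * π) := by
  rw [displacement_congr (lt_dPt_zero hab).le psi_eqOn_Ioo_head,
    displacement_phi (lt_dPt_zero hab).ne, dPt_zero_sub]

lemma intervalIntegrable_psi_tail (hab : a < b) (hn : n ≠ 0) :
    IntervalIntegrable (psi a b n) volume (dPt a b n 0) b := by
  have h := IntervalIntegrable.trans_iterate (n := n) fun i _ =>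
    intervalIntegrable_psi_dPt hab hn i
  rwa [dPt_self hn] at h

lemma integral_psi_tail (hab : a < b) (hn : n ≠ 0) :
    ∫ t in dPt a b n 0..b, psi a b n t = 0 := by
  have h := integral_eq_zero_of_adjacent_intervals (intervalIntegrable_psi_dPt hab hn)
    (integral_psi_dPt hab hn) n
  rwa [dPt_self hn] at h

lemma displacement_psi_tail (hab : a < b) (hn : n ≠ 0) :
    displacement (psi a b n) (dPt a b n 0) b = 0 := by
  have h := sum_displacement_adjacent_intervals (intervalIntegrable_psi_dPt hab hn)
    (integral_psi_dPt hab hn) n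
  rw [dPt_self hn] at h
  rw [← h]
  exact Finset.sum_eq_zero fun i _ => displacement_psi_dPt hab hn i

lemma intervalIntegrable_psi (hab : a < b) (hn : n ≠ 0) :
    IntervalIntegrable (psi a b n) volume a b :=
  (intervalIntegrable_psi_head hab).trans (intervalIntegrable_psi_tail hab hn)

lemma integral_psi (hab : a < b) (hn : n ≠ 0) : ∫ t in a..b, psi a b n t = 0 := by
  rw [← integral_add_adjacent_intervals (intervalIntegrable_psi_head hab)
    (intervalIntegrable_psi_tail hab hn), integral_psi_head hab, integral_psi_tail hab hn, add_zero]

lemma displacement_psi (hab : a < b) (hn : n ≠ 0) :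
    displacement (psi a b n) a b = (5 * (b - a) / 6) ^ 3 / (8 * π) := by
  rw [← displacement_add_adjacent_intervals (intervalIntegrable_psi_head hab)
    (intervalIntegrable_psi_tail hab hn) (integral_psi_head hab), displacement_psi_head hab,
    displacement_psi_tail hab hn, add_zero]

end Psi

lemma Finset.sum_range_succ_eq_sum_Icc {M : Type*} [AddCommMonoid M] (g : ℕ → M) (N : ℕ) :
    ∑ i ∈ Finset.range N, g (i + 1) = ∑ i ∈ Finset.Icc 1 N, g i := by
  rw [Finset.range_eq_Ico, Finset.sum_Ico_add' g, zero_add, Finset.Ico_add_one_right_eq_Icc]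

lemma tendsto_sum_Icc_exp_neg_mul {r : ℝ} (hr : 0 < r) :
    Tendsto (fun N : ℕ => ∑ i ∈ Finset.Icc 1 N, exp (-r * i)) atTop
      (nhds (exp r - 1)⁻¹) := by
  have hs := ((hasSum_geometric_of_lt_one (exp_pos (-r)).le
    (exp_lt_one_iff.2 (neg_neg_of_pos hr))).mul_left (exp (-r))).tendsto_sum_nat
  convert hs using 1
  · funext N
    rw [← Finset.sum_range_succ_eq_sum_Icc]
    refine Finset.sum_congr rfl fun i _ => ?_
    rw [← exp_nat_mul, ← exp_add]
    push_cast
    ring_nf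
  · have : exp r - 1 ≠ 0 := (sub_pos.2 (one_lt_exp_iff.2 hr)).ne'
    rw [exp_neg]
    field_simp

lemma tSeq_zero : tSeq 0 = 0 := by simp [tSeq]

lemma tSeq_succ_sub (m : ℕ) : tSeq (m + 1) - tSeq m = exp (-(m + 1)) * (exp 1 - 1) := by
  rw [tSeq, tSeq, mul_sub, ← exp_add]
  push_cast
  ring_nf

lemma tSeq_lt_one (m : ℕ) : tSeq m < 1 :=
  sub_lt_self 1 (exp_pos _)

lemma tSeq_lt_succ (m : ℕ) : tSeq m < tSeq (m + 1) := by
  rw [← sub_pos, tSeq_succ_sub]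
  exact mul_pos (exp_pos _) (sub_pos.2 (one_lt_exp_iff.2 one_pos))

lemma floor_neg_log_one_sub {m : ℕ} {t : ℝ} (ht : t ∈ Ico (tSeq m) (tSeq (m + 1))) :
    ⌊-log (1 - t)⌋₊ = m := by
  have h₁ : 1 - t ≤ exp (-m) := by linarith [ht.1, show tSeq m = 1 - exp (-m) from rfl]
  have h₂ : exp (-(m + 1)) < 1 - t := by
    linarith [ht.2, show tSeq (m + 1) = 1 - exp (-(m + 1)) by simp [tSeq]]
  have h₀ : 0 < 1 - t := (exp_pos _).trans h₂
  have hle := (log_le_iff_le_exp h₀).2 h₁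
  have hlt := (lt_log_iff_exp_lt h₀).2 h₂
  rw [Nat.floor_eq_iff (by linarith [m.cast_nonneg (α := ℝ)])]
  constructor <;> linarith

lemma aY_eqOn_Ioo_tSeq (m : ℕ) :
    EqOn aY (psi (tSeq m) (tSeq (m + 1)) (m + 1)) (Ioo (tSeq m) (tSeq (m + 1))) :=
  fun t ht => by
    rw [aY, if_pos (ht.2.trans (tSeq_lt_one _)), floor_neg_log_one_sub (Ioo_subset_Ico_self ht)]

lemma intervalIntegrable_aY_tSeq (m : ℕ) :
    IntervalIntegrable aY volume (tSeq m) (tSeq (m + 1)) :=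
  (intervalIntegrable_psi (tSeq_lt_succ m) m.succ_ne_zero).congr_uIoo <| by
    rw [uIoo_of_lt (tSeq_lt_succ m)]
    exact (aY_eqOn_Ioo_tSeq m).symm

lemma integral_aY_tSeq (m : ℕ) : ∫ t in tSeq m..tSeq (m + 1), aY t = 0 := by
  rw [integral_congr_Ioo_of_le (tSeq_lt_succ m).le (aY_eqOn_Ioo_tSeq m),
    integral_psi (tSeq_lt_succ m) m.succ_ne_zero]

lemma displacement_aY_tSeq (m : ℕ) :
    displacement aY (tSeq m) (tSeq (m + 1)) =
      5 ^ 3 * (exp 1 - 1) ^ 3 / (6 ^ 3 * 8 * π) * exp (-3 * (m + 1 : ℕ)) := by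
  rw [displacement_congr (tSeq_lt_succ m).le (aY_eqOn_Ioo_tSeq m),
    displacement_psi (tSeq_lt_succ m) m.succ_ne_zero, tSeq_succ_sub,
    show exp (-3 * (m + 1 : ℕ)) = exp (-(m + 1)) ^ 3 by rw [← exp_nat_mul]; push_cast; ring_nf]
  ring

lemma sY_eq_displacement (t : ℝ) : sY t = displacement aY 0 t := rfl

lemma sY_tSeq (N : ℕ) :
    sY (tSeq N) = 5 ^ 3 * (exp 1 - 1) ^ 3 / (6 ^ 3 * 8 * π) *
      ∑ i ∈ Finset.Icc 1 N, exp (-3 * i) := by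
  rw [sY_eq_displacement, ← tSeq_zero, ← sum_displacement_adjacent_intervals
    intervalIntegrable_aY_tSeq integral_aY_tSeq, Finset.mul_sum,
    ← Finset.sum_range_succ_eq_sum_Icc]
  exact Finset.sum_congr rfl fun i _ => displacement_aY_tSeq i

theorem sY_at_tn :
    (∀ N : ℕ, sY (tSeq N) =
      (5 ^ 3 * (Real.exp 1 - 1) ^ 3 / (6 ^ 3 * 8 * π)) *
        ∑ i ∈ Finset.Icc 1 N, Real.exp (-(3 : ℝ) * (i : ℝ))) ∧
    Tendsto (fun N => sY (tSeq N)) atTop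
      (nhds (5 ^ 3 * (Real.exp 1 - 1) ^ 3 / (6 ^ 3 * 8 * π * (Real.exp 3 - 1)))) := by
  refine ⟨sY_tSeq, ?_⟩
  have h := (tendsto_sum_Icc_exp_neg_mul three_pos).const_mul
    (5 ^ 3 * (exp 1 - 1) ^ 3 / (6 ^ 3 * 8 * π))
  rwa [← div_eq_mul_inv, div_div, ← funext sY_tSeq] at h
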